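/- Let κ be a regular uncountable cardinal and let U be a uniform ultrafilter on κ. If U has an almost-decreasing generating sequence, then U has an almost-decreasing generating sequence ⟨A_i : i < θ⟩ whose length θ is a regular cardinal with θ > κ. -/

import Mathlib

universe u

open Cardinal Set

/-- `A ⊆* B` below the cardinal `κ`: the difference `A \ B` is bounded below `κ`
(where `κ` is identified with its set of ordinals `Set.Iio κ.ord`). -/
def AlmostSub (κ : Cardinal.{u}) (A B : Set Ordinal.{u}) : Prop :=
  ∃ β, β < κ.ord ∧ A \ B ⊆ Set.Iio β

/-- An ultrafilter on the cardinal `κ`, identified with its set of ordinals `Set.Iio κ.ord`. -/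
structure UltrafilterOn (κ : Cardinal.{u}) : Type (u + 1) where
  sets : Set (Set Ordinal.{u})
  sets_subset : ∀ A ∈ sets, A ⊆ Set.Iio κ.ord
  univ_mem : Set.Iio κ.ord ∈ sets
  superset_mem : ∀ A ∈ sets, ∀ B, B ⊆ Set.Iio κ.ord → A ⊆ B → B ∈ sets
  inter_mem : ∀ A ∈ sets, ∀ B ∈ sets, A ∩ B ∈ sets
  empty_not_mem : ∅ ∉ sets
  mem_or_compl_mem : ∀ A, A ⊆ Set.Iio κ.ord → A ∈ sets ∨ Set.Iio κ.ord \ A ∈ sets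

namespace UltrafilterOn

variable {κ : Cardinal.{u}}

/-- A uniform ultrafilter: every member has cardinality `κ`. -/
def IsUniform (U : UltrafilterOn κ) : Prop :=
  ∀ A ∈ U.sets, #A = Cardinal.lift.{u + 1, u} κ

/-- `κ`-completeness: `U` is closed under intersections of fewer than `κ` many of its members. -/
def IsComplete (U : UltrafilterOn κ) : Prop :=
  ∀ S : Set (Set Ordinal.{u}), S.Nonempty → S ⊆ U.sets →
    #S < Cardinal.lift.{u + 1, u} κ → ⋂₀ S ∈ U.sets

/-- Nonprincipal: no singleton is a member. -/
def IsNonprincipal (U : UltrafilterOn κ) : Prop :=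
  ∀ β : Ordinal.{u}, {β} ∉ U.sets

/-- A base for `U`: a subfamily `B ⊆ U` such that every member of `U` almost contains
a member of `B`. -/
def IsBase (U : UltrafilterOn κ) (B : Set (Set Ordinal.{u})) : Prop :=
  B ⊆ U.sets ∧ ∀ X ∈ U.sets, ∃ Y ∈ B, AlmostSub κ Y X

/-- The character of `U`: the least cardinality of a base for `U`. -/
noncomputable def char (U : UltrafilterOn κ) : Cardinal.{u + 1} :=
  sInf {c | ∃ B, U.IsBase B ∧ #B = c}

/-- `⟨A i : i < θord⟩` is an almost-decreasing generating sequence for `U`: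
its entries are members of `U`, it is `⊆*`-decreasing, and its range is a base for `U`. -/
def IsADGenSeq (U : UltrafilterOn κ) (θord : Ordinal.{u})
    (A : Ordinal.{u} → Set Ordinal.{u}) : Prop :=
  (∀ i, i < θord → A i ∈ U.sets) ∧
  (∀ i j, i ≤ j → j < θord → AlmostSub κ (A j) (A i)) ∧
  U.IsBase (A '' Set.Iio θord)

/-- A normal measure on `κ`: a `κ`-complete nonprincipal ultrafilter such that every
function regressive on a member of `U` is constant on a member of `U`. -/
def IsNormalMeasure (U : UltrafilterOn κ) : Prop :=
  U.IsComplete ∧ U.IsNonprincipal ∧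
  ∀ f : Ordinal.{u} → Ordinal.{u},
    (∃ X ∈ U.sets, ∀ α ∈ X, f α < α) → ∃ Y ∈ U.sets, ∃ c, ∀ α ∈ Y, f α = c

end UltrafilterOn

/-- `κ` is a measurable cardinal: it is uncountable and carries a `κ`-complete
nonprincipal ultrafilter. -/
def IsMeasurableCard (κ : Cardinal.{u}) : Prop :=
  ℵ₀ < κ ∧ ∃ U : UltrafilterOn κ, U.IsComplete ∧ U.IsNonprincipal

/-- `f <* g`: eventual (pointwise) domination below `ρord`. -/
def EvDomLt (ρord : Ordinal.{u}) (f g : Ordinal.{u} → Ordinal.{u}) : Prop :=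
  ∃ i₀, i₀ < ρord ∧ ∀ i, i₀ ≤ i → i < ρord → f i < g i

/-- Membership in the product `∏_{i < ρord} lam i` (of cardinals `lam i`). -/
def InProd (ρord : Ordinal.{u}) (lam : Ordinal.{u} → Cardinal.{u})
    (f : Ordinal.{u} → Ordinal.{u}) : Prop :=
  ∀ i, i < ρord → f i < (lam i).ord

/-- `⟨g η : η < ν⟩` is a scale of length `ν` in `∏_{i < ρord} lam i`:
a `<*`-increasing and `<*`-cofinal sequence in the product. -/
def IsScale (ρord : Ordinal.{u}) (lam : Ordinal.{u} → Cardinal.{u}) (ν : Cardinal.{u})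
    (g : Ordinal.{u} → Ordinal.{u} → Ordinal.{u}) : Prop :=
  (∀ η, η < ν.ord → InProd ρord lam (g η)) ∧
  (∀ η₁ η₂, η₁ < η₂ → η₂ < ν.ord → EvDomLt ρord (g η₁) (g η₂)) ∧
  ∀ f, InProd ρord lam f → ∃ η, η < ν.ord ∧ EvDomLt ρord f (g η)

/-- `supBelow μ i = sup_{i' < i} μ i'`. -/
noncomputable def supBelow (μ : Ordinal.{u} → Cardinal.{u}) (i : Ordinal.{u}) : Cardinal.{u} :=
  sSup {c | ∃ i', i' < i ∧ c = μ i'}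

/-!
Given at most `κ` sets of size `κ`, choosing pairwise distinct points greedily along a
well-order of length `κ` yields a set `X` meeting every one of them, and its complement, in `κ`
points. Since bounded subsets of `κ` are small, neither `X` nor its complement
almost contains a member of the family, so a uniform ultrafilter on `κ` has no base of size
`≤ κ`. Restricting an almost-decreasing generating sequence of length `θ` to a fundamental
sequence of `θ` gives one of length `cf θ`, which is therefore `> κ`, hence infinite and regular.
-/

universe v

open Function Ordinal

section InjectiveChoice

variable {J α : Type v}

theorem exists_injective_forall_mem_of_isWellOrder (r : J → J → Prop) [IsWellOrder J r]
    (T : J → Set α) (hT : ∀ j, #{ i // r i j } < #(T j)) :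
    ∃ f : J → α, Injective f ∧ ∀ j, f j ∈ T j := by
  have fresh : ∀ j (g : ∀ i, r i j → α), ∃ x ∈ T j, ∀ i (hi : r i j), g i hi ≠ x := by
    intro j g
    by_contra! hcover
    have hsub : T j ⊆ range fun i : { i // r i j } => g i i.2 := fun x hx =>
      let ⟨i, hi, hix⟩ := hcover x hx
      ⟨⟨i, hi⟩, hix⟩
    exact (hT j).not_ge ((mk_le_mk_of_subset hsub).trans mk_range_le)
  choose pick pick_mem pick_fresh using fresh
  let f : J → α := IsWellFounded.wf.fix (r := r) (C := fun _ => α) pick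
  have hf : ∀ j, f j = pick j fun i _ => f i := IsWellFounded.wf.fix_eq _
  refine ⟨f, fun i j hij => ?_, fun j => hf j ▸ pick_mem _ _⟩
  rcases trichotomous_of r i j with hlt | heq | hgt
  · exact (pick_fresh j (fun k _ => f k) i hlt (hij.trans (hf j))).elim
  · exact heq
  · exact (pick_fresh i (fun k _ => f k) j hgt (hij.symm.trans (hf i))).elim

theorem exists_injective_forall_mem (T : J → Set α) (hT : ∀ j, #J ≤ #(T j)) :
    ∃ f : J → α, Injective f ∧ ∀ j, f j ∈ T j := by
  obtain ⟨r, _, hr⟩ := exists_ord_eq J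
  exact exists_injective_forall_mem_of_isWellOrder r T fun j =>
    (card_typein_lt j hr).trans_le (hT j)

end InjectiveChoice

theorem exists_splitting_set {ι α : Type v} {κ : Cardinal.{v}} (hκ : ℵ₀ ≤ κ)
    (B : ι → Set α) (hι : #ι ≤ κ) (hB : ∀ i, κ ≤ #(B i)) :
    ∃ X : Set α, ∀ i, κ ≤ #↥(B i ∩ X) ∧ κ ≤ #↥(B i \ X) := by
  have hJ : #(ι × κ.out × Bool) ≤ κ := by
    simp only [mk_prod, Cardinal.lift_id, mk_out, mk_bool, Cardinal.lift_uzero,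
      Cardinal.lift_ofNat]
    calc #ι * (κ * 2) ≤ κ * (κ * κ) := by
          gcongr
          exact (natCast_lt_aleph0 (n := 2)).le.trans hκ
      _ = κ := by rw [mul_eq_self hκ, mul_eq_self hκ]
  obtain ⟨f, hf, hfB⟩ := exists_injective_forall_mem (fun j : ι × κ.out × Bool => B j.1)
    fun j => hJ.trans (hB j.1)
  have le_mk_of_forall_mem : ∀ i b {S : Set α}, (∀ ζ, f (i, ζ, b) ∈ S) → κ ≤ #S :=
    fun i b S hS => calc
      κ = #κ.out := (mk_out κ).symm
      _ ≤ #S := mk_le_of_injective (f := fun ζ => (⟨f (i, ζ, b), hS ζ⟩ : S))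
        fun ζ ζ' h => by simpa using hf (congrArg Subtype.val h)
  refine ⟨range fun p : ι × κ.out => f (p.1, p.2, true), fun i => ⟨?_, ?_⟩⟩
  · exact le_mk_of_forall_mem i true fun ζ => ⟨hfB (i, ζ, true), ⟨(i, ζ), rfl⟩⟩
  · exact le_mk_of_forall_mem i false fun ζ =>
      ⟨hfB (i, ζ, false), fun ⟨p, hp⟩ => by simpa using hf hp⟩

section AlmostSub

variable {κ : Cardinal.{u}}

theorem AlmostSub.trans {A B C : Set Ordinal.{u}} (hAB : AlmostSub κ A B)
    (hBC : AlmostSub κ B C) : AlmostSub κ A C := by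
  obtain ⟨β₁, hβ₁, hAB⟩ := hAB
  obtain ⟨β₂, hβ₂, hBC⟩ := hBC
  refine ⟨max β₁ β₂, max_lt hβ₁ hβ₂, fun x hx => ?_⟩
  by_cases hxB : x ∈ B
  · exact mem_Iio.2 (lt_max_of_lt_right (hBC ⟨hxB, hx.2⟩))
  · exact mem_Iio.2 (lt_max_of_lt_left (hAB ⟨hx.1, hxB⟩))

theorem mk_lt_lift_of_subset_Iio {β : Ordinal.{u}} (hβ : β < κ.ord) {T : Set Ordinal.{u}}
    (hT : T ⊆ Iio β) : #T < Cardinal.lift.{u + 1} κ :=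
  calc #T ≤ #(Iio β) := mk_le_mk_of_subset hT
    _ = Cardinal.lift.{u + 1} β.card := Cardinal.mk_Iio_ordinal β
    _ < Cardinal.lift.{u + 1} κ := lift_lt.2 (lt_ord.1 hβ)

theorem not_almostSub_of_lift_le_mk_diff {A B : Set Ordinal.{u}}
    (h : Cardinal.lift.{u + 1} κ ≤ #↥(A \ B)) : ¬ AlmostSub κ A B := fun ⟨_, hβ, hsub⟩ =>
  (mk_lt_lift_of_subset_Iio hβ hsub).not_ge h

end AlmostSub

namespace UltrafilterOn

variable {κ : Cardinal.{u}} {U : UltrafilterOn κ}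

theorem IsBase.lift_lt_mk (hκ : ℵ₀ ≤ κ) (hU : U.IsUniform) {𝓑 : Set (Set Ordinal.{u})}
    (h𝓑 : U.IsBase 𝓑) : Cardinal.lift.{u + 1} κ < #𝓑 := by
  by_contra! hsmall
  obtain ⟨X, hX⟩ := exists_splitting_set (aleph0_le_lift.2 hκ) (fun Y : 𝓑 => (Y : Set Ordinal))
    hsmall fun Y => (hU Y (h𝓑.1 Y.2)).ge
  have hX' : Iio κ.ord ∩ X ⊆ Iio κ.ord := inter_subset_left
  rcases U.mem_or_compl_mem _ hX' with hmem | hmem <;>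
    obtain ⟨Y, hY, hYX⟩ := h𝓑.2 _ hmem
  · refine not_almostSub_of_lift_le_mk_diff ((hX ⟨Y, hY⟩).2.trans (mk_le_mk_of_subset ?_)) hYX
    exact sdiff_subset_sdiff_right inter_subset_right
  · refine not_almostSub_of_lift_le_mk_diff ((hX ⟨Y, hY⟩).1.trans (mk_le_mk_of_subset ?_)) hYX
    exact fun x ⟨hxY, hxX⟩ => ⟨hxY, fun h => h.2 ⟨U.sets_subset Y (h𝓑.1 hY) hxY, hxX⟩⟩

theorem IsADGenSeq.reindex {θ a : Ordinal.{u}} {A : Ordinal.{u} → Set Ordinal.{u}}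
    (hA : U.IsADGenSeq θ A) {g : Iio a → Iio θ} (hg : Monotone g) (hcof : IsCofinal (range g)) :
    U.IsADGenSeq a fun i => if h : i < a then A (g ⟨i, h⟩) else ∅ := by
  obtain ⟨hmem, hdec, -, hbase⟩ := hA
  refine ⟨fun i hi => ?_, fun i j hij hj => ?_, ?_, fun X hX => ?_⟩
  · simpa only [hi, ↓reduceDIte] using hmem _ (g ⟨i, hi⟩).2
  · simpa only [hj, hij.trans_lt hj, ↓reduceDIte] using
      hdec _ _ (hg (show (⟨i, hij.trans_lt hj⟩ : Iio a) ≤ ⟨j, hj⟩ from hij)) (g ⟨j, hj⟩).2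
  · rintro _ ⟨i, hi : i < a, rfl⟩
    simpa only [hi, ↓reduceDIte] using hmem _ (g ⟨i, hi⟩).2
  · obtain ⟨_, ⟨j, hj, rfl⟩, hjX⟩ := hbase X hX
    obtain ⟨_, ⟨i, rfl⟩, hji⟩ := hcof ⟨j, hj⟩
    refine ⟨_, ⟨i, i.2, rfl⟩, ?_⟩
    simpa only [show (i : Ordinal) < a from i.2, ↓reduceDIte] using
      (hdec j _ hji (g i).2).trans hjX

end UltrafilterOn

theorem statement4_general (κ : Cardinal.{u}) (hκunc : ℵ₀ < κ)
    (U : UltrafilterOn κ) (hU : U.IsUniform)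
    (h : ∃ (θord : Ordinal.{u}) (A : Ordinal.{u} → Set Ordinal.{u}), U.IsADGenSeq θord A) :
    ∃ (θ : Cardinal.{u}) (A : Ordinal.{u} → Set Ordinal.{u}),
      θ.IsRegular ∧ κ < θ ∧ U.IsADGenSeq θ.ord A := by
  obtain ⟨θ, A, hA⟩ := h
  obtain ⟨g, hg⟩ := exists_isFundamentalSeq (o := θ) rfl
  have hA' := hA.reindex hg.strictMono.monotone hg.isCofinal_range
  have hκθ : κ < θ.cof := by
    have := (hA'.2.2.lift_lt_mk hκunc.le hU).trans_le mk_image_le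
    rwa [Cardinal.mk_Iio_ordinal, card_ord, Cardinal.lift_lt] at this
  exact ⟨θ.cof, _, ⟨hκunc.le.trans hκθ.le, (cof_ord_cof θ).ge⟩, hκθ, hA'⟩

/-- a uniform ultrafilter on a regular uncountable cardinal `κ` with an
almost-decreasing generating sequence has one whose length is a regular cardinal `θ > κ`. -/
theorem statement4 (κ : Cardinal.{u}) (hκreg : κ.IsRegular) (hκunc : ℵ₀ < κ)
    (U : UltrafilterOn κ) (hU : U.IsUniform)
    (h : ∃ (θord : Ordinal.{u}) (A : Ordinal.{u} → Set Ordinal.{u}), U.IsADGenSeq θord A) :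
    ∃ (θ : Cardinal.{u}) (A : Ordinal.{u} → Set Ordinal.{u}),
      θ.IsRegular ∧ κ < θ ∧ U.IsADGenSeq θ.ord A :=
  statement4_general κ hκunc U hU h
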